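/- Let ℓ and N be natural numbers and let f : ℂ → ℝ be smooth (ContDiff ℝ ⊤), regarded as ℂ-valued via coercion. Define ψ_f : ℂ → ℂ by ψ_f(z) = ℓ − N·|z|²/(1+|z|²) + z·∂f(z). Then for every z ∈ ℂ: ∂̄ψ_f(z) = z·(∂̄(w ↦ ∂f(w))(z) − N/(1+|z|²)²). (This is the identity −i∂̄ψ_f = ι_{v^{1,0}}(i∂̄∂ log h) for the metric h = e^f·h_FS^N on O_{ℙ¹}(N), expressed in the coordinate z, where v^{1,0} = z∂_z and log h = f − N·log(1+|z|²).) -/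

import Mathlib

/-- The Wirtinger derivative `∂u`. -/
noncomputable def wdz (u : ℂ → ℂ) (z : ℂ) : ℂ :=
  (1 / 2) * (fderiv ℝ u z 1 - Complex.I • fderiv ℝ u z Complex.I)

/-- The Wirtinger derivative `∂̄u`. -/
noncomputable def wdzbar (u : ℂ → ℂ) (z : ℂ) : ℂ :=
  (1 / 2) * (fderiv ℝ u z 1 + Complex.I • fderiv ℝ u z Complex.I)

open Complex

private lemma wdzbar_eq (u : ℂ → ℂ) {L : ℂ →L[ℝ] ℂ} {z : ℂ} (h : HasFDerivAt u L z) :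
    wdzbar u z = (1/2) * (L 1 + Complex.I * L Complex.I) := by
  rw [wdzbar, h.fderiv, smul_eq_mul]

private lemma wdzbar_mul_id (g : ℂ → ℂ) (z : ℂ) (hg : DifferentiableAt ℝ g z) :
    wdzbar (fun w => w * g w) z = z * wdzbar g z := by
  have h1 : HasFDerivAt (fun w : ℂ => w * g w)
      (z • (fderiv ℝ g z) + g z • (ContinuousLinearMap.id ℝ ℂ)) z := by
    exact (hasFDerivAt_id z).mul hg.hasFDerivAt
  rw [wdzbar_eq _ h1, wdzbar, smul_eq_mul]
  simp only [ContinuousLinearMap.add_apply, ContinuousLinearMap.smul_apply,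
    ContinuousLinearMap.id_apply, smul_eq_mul]
  linear_combination (g z / 2) * Complex.I_sq

private lemma wdzbar_real (h : ℂ → ℝ) {L : ℂ →L[ℝ] ℝ} {z : ℂ} (hh : HasFDerivAt h L z) :
    wdzbar (fun w => ((h w : ℝ) : ℂ)) z = (1/2) * ((L 1 : ℂ) + Complex.I * (L Complex.I : ℂ)) := by
  have : HasFDerivAt (fun w => ((h w : ℝ) : ℂ)) (Complex.ofRealCLM.comp L) z :=
    Complex.ofRealCLM.hasFDerivAt.comp z hh
  rw [wdzbar_eq _ this]
  simp

theorem dbar_psi_f (ℓ N : ℕ) (f : ℂ → ℝ) (hf : ContDiff ℝ (⊤ : ℕ∞) f) (z : ℂ) :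
    wdzbar (fun w : ℂ =>
        (((ℓ : ℝ) - (N : ℝ) * ‖w‖ ^ 2 / (1 + ‖w‖ ^ 2) : ℝ) : ℂ)
          + w * wdz (fun v : ℂ => ((f v : ℝ) : ℂ)) w) z
      = z * (wdzbar (fun w : ℂ => wdz (fun v : ℂ => ((f v : ℝ) : ℂ)) w) z
          - (N : ℂ) / (1 + ((‖z‖ : ℝ) : ℂ) ^ 2) ^ 2) := by
  -- the inner function g = ∂f is differentiable
  set g : ℂ → ℂ := fun w => wdz (fun v : ℂ => ((f v : ℝ) : ℂ)) w with hg_def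
  have hfd : Differentiable ℝ f := hf.differentiable (by simp)
  have hcoe : ∀ w : ℂ, fderiv ℝ (fun v : ℂ => ((f v : ℝ) : ℂ)) w
      = Complex.ofRealCLM.comp (fderiv ℝ f w) := fun w =>
    (Complex.ofRealCLM.hasFDerivAt.comp w (hfd w).hasFDerivAt).fderiv
  have hgeq : g = fun w => (1/2) * (((fderiv ℝ f w 1 : ℝ) : ℂ)
      - Complex.I * ((fderiv ℝ f w Complex.I : ℝ) : ℂ)) := by
    funext w
    simp only [hg_def, wdz, hcoe w, smul_eq_mul]
    simp
  have hF : ContDiff ℝ (⊤ : ℕ∞) (fderiv ℝ f) := hf.fderiv_right (m := (⊤ : ℕ∞)) (by simp)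
  have hg_diff : Differentiable ℝ g := by
    rw [hgeq]
    have h1 : Differentiable ℝ (fun w => fderiv ℝ f w 1) :=
      ((hF.clm_apply contDiff_const).differentiable (by simp))
    have h2 : Differentiable ℝ (fun w => fderiv ℝ f w Complex.I) :=
      ((hF.clm_apply contDiff_const).differentiable (by simp))
    exact (differentiable_const _).mul
      ((Complex.ofRealCLM.differentiable.comp h1).sub
        (differentiable_const _ |>.mul (Complex.ofRealCLM.differentiable.comp h2)))
  -- derivative of the real part
  set Q : ℂ → ℝ := fun w => w.re * w.re + w.im * w.im with hQ_def
  have habs : ∀ w : ℂ, ‖w‖ ^ 2 = Q w := by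
    intro w; rw [Complex.sq_norm, Complex.normSq_apply]
  have hQz : 0 ≤ Q z := by
    have := mul_self_nonneg z.re; have := mul_self_nonneg z.im
    simp only [hQ_def]; linarith
  have hne : (1 : ℝ) + Q z ≠ 0 := by positivity
  set LQ : ℂ →L[ℝ] ℝ := z.re • Complex.reCLM + z.re • Complex.reCLM
      + (z.im • Complex.imCLM + z.im • Complex.imCLM) with hLQ_def
  have hQder : HasFDerivAt Q LQ z := by
    exact ((Complex.reCLM.hasFDerivAt (x := z)).mul (Complex.reCLM.hasFDerivAt)).add
      ((Complex.imCLM.hasFDerivAt (x := z)).mul (Complex.imCLM.hasFDerivAt))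
  -- φ t = ℓ - N t / (1+t)
  have hφ : HasDerivAt (fun t : ℝ => (ℓ : ℝ) - (N : ℝ) * t / (1 + t))
      (-((N : ℝ) / (1 + Q z) ^ 2)) (Q z) := by
    have hdiv := (((hasDerivAt_id (Q z)).const_mul (N : ℝ)).div
        ((hasDerivAt_id (Q z)).const_add 1) hne)
    have : HasDerivAt (fun t : ℝ => (ℓ : ℝ) - (N : ℝ) * t / (1 + t)) _ (Q z) :=
      (hasDerivAt_const (Q z) (ℓ : ℝ)).sub hdiv
    convert this using 1
    simp only [id]
    field_simp
    ring
  set h : ℂ → ℝ := fun w => (ℓ : ℝ) - (N : ℝ) * ‖w‖ ^ 2 / (1 + ‖w‖ ^ 2)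
    with hh_def
  have hhder : HasFDerivAt h ((-((N : ℝ) / (1 + Q z) ^ 2)) • LQ) z := by
    have : HasFDerivAt (fun w : ℂ => (ℓ : ℝ) - (N : ℝ) * Q w / (1 + Q w))
        ((-((N : ℝ) / (1 + Q z) ^ 2)) • LQ) z := hφ.comp_hasFDerivAt z hQder
    convert this using 2 with w
    rw [hh_def]; simp only [habs w]
  -- split the sum
  have hreal_diff : DifferentiableAt ℝ (fun w => ((h w : ℝ) : ℂ)) z :=
    (Complex.ofRealCLM.hasFDerivAt.comp z hhder).differentiableAt
  have hmul_diff : DifferentiableAt ℝ (fun w : ℂ => w * g w) z :=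
    (differentiableAt_id.mul (hg_diff z))
  have hsplit : wdzbar (fun w : ℂ => ((h w : ℝ) : ℂ) + w * g w) z
      = wdzbar (fun w => ((h w : ℝ) : ℂ)) z + wdzbar (fun w : ℂ => w * g w) z := by
    unfold wdzbar
    rw [fderiv_fun_add hreal_diff hmul_diff]
    simp only [ContinuousLinearMap.add_apply, smul_eq_mul]
    ring
  have hreal_val : wdzbar (fun w => ((h w : ℝ) : ℂ)) z
      = -((N : ℂ) * z / (1 + ((‖z‖ : ℝ) : ℂ) ^ 2) ^ 2) := by
    rw [wdzbar_real h hhder]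
    simp only [ContinuousLinearMap.smul_apply, hLQ_def, ContinuousLinearMap.add_apply,
      ContinuousLinearMap.coe_smul', Pi.smul_apply, Complex.reCLM_apply, Complex.imCLM_apply,
      Complex.one_re, Complex.one_im, Complex.I_re, Complex.I_im, smul_eq_mul]
    have hzeq : (z : ℂ) = (z.re : ℂ) + (z.im : ℂ) * Complex.I := (Complex.re_add_im z).symm
    have habsz : ((‖z‖ : ℝ) : ℂ) ^ 2 = ((Q z : ℝ) : ℂ) := by
      rw [← Complex.ofReal_pow, habs z]
    have hneC : ((1 : ℂ) + ((Q z : ℝ) : ℂ)) ≠ 0 := by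
      rw [show (1 : ℂ) + ((Q z : ℝ) : ℂ) = (((1 + Q z : ℝ)) : ℂ) by push_cast; ring]
      exact_mod_cast hne
    have hne2 : ((1 : ℂ) + ((z.re : ℂ) ^ 2 + (z.im : ℂ) ^ 2)) ≠ 0 := by
      have h0 : (((1 + Q z : ℝ)) : ℂ) ≠ 0 := Complex.ofReal_ne_zero.mpr hne
      rw [hQ_def] at h0
      push_cast at h0
      convert h0 using 2; ring
    rw [habsz]
    simp only [hQ_def]
    push_cast
    linear_combination ((N : ℂ) / (1 + ((z.re : ℂ) ^ 2 + (z.im : ℂ) ^ 2)) ^ 2) * hzeq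
  calc wdzbar (fun w : ℂ => ((h w : ℝ) : ℂ) + w * g w) z
      = wdzbar (fun w => ((h w : ℝ) : ℂ)) z + wdzbar (fun w : ℂ => w * g w) z := hsplit
    _ = -((N : ℂ) * z / (1 + ((‖z‖ : ℝ) : ℂ) ^ 2) ^ 2) + z * wdzbar g z := by
        rw [hreal_val, wdzbar_mul_id g z (hg_diff z)]
    _ = z * (wdzbar g z - (N : ℂ) / (1 + ((‖z‖ : ℝ) : ℂ) ^ 2) ^ 2) := by ring
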